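/- arXiv:0807.1528 — 4 statements merged into one kernel-verified Lean document; each statement's English description precedes it below -/
import Mathlib

section
/- Let q > 3 with q ≠ 7, and let S be a cyclic group of order q+1. Let χ be a character of S of order greater than 2 and ψ a nontrivial character of S. Then it is not the case that χ(s) + χ(s)⁻¹ = −(ψ(s) + ψ(s)⁻¹) for all s ∈ S with s² ≠ 1. -/
/-- Sum of a nontrivial character over a finite group is zero. -/
lemma sum_char_eq_zero {S : Type*} [CommGroup S] [Fintype S] (η : S →* ℂˣ) (h : η ≠ 1) :
    ∑ s, (η s : ℂ) = 0 := by
  obtain ⟨t, ht⟩ : ∃ t, η t ≠ 1 := by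
    by_contra hc
    push_neg at hc
    exact h (MonoidHom.ext fun s => hc s)
  have key : (η t : ℂ) * ∑ s, (η s : ℂ) = ∑ s, (η s : ℂ) := by
    rw [Finset.mul_sum]
    refine Fintype.sum_bijective (t * ·) (Group.mulLeft_bijective t) _ _ fun s => ?_
    simp [map_mul]
  have h2 : ((η t : ℂ) - 1) * ∑ s, (η s : ℂ) = 0 := by
    rw [sub_mul, one_mul, key, sub_self]
  rcases mul_eq_zero.1 h2 with h1 | h1
  · refine absurd (Units.ext ?_) ht
    rw [Units.val_one]
    exact sub_eq_zero.mp h1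
  · exact h1

lemma sum_mem_048 {S : Type*} [DecidableEq S] (T : Finset S) (f : S → ℂ)
    (hf : ∀ s ∈ T, f s = 0 ∨ f s = 4) (hc : T.card ≤ 2) :
    T.sum f = 0 ∨ T.sum f = 4 ∨ T.sum f = 8 := by
  have h3 : T.card = 0 ∨ T.card = 1 ∨ T.card = 2 := by omega
  rcases h3 with h | h | h
  · rw [Finset.card_eq_zero] at h; subst h; simp
  · rw [Finset.card_eq_one] at h
    obtain ⟨a, rfl⟩ := h
    rw [Finset.sum_singleton]
    rcases hf a (by simp) with h | h <;> simp [h]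
  · rw [Finset.card_eq_two] at h
    obtain ⟨a, b, hab, rfl⟩ := h
    rw [Finset.sum_pair hab]
    rcases hf a (by simp) with h1 | h1 <;> rcases hf b (by simp) with h2 | h2 <;>
      rw [h1, h2] <;> norm_num

/-- Lemma 4.2(ii): if `q > 3`, `q ≠ 7`, `S` cyclic of order `q+1`, `χ` a character of
order `> 2` and `ψ` a nontrivial character, then `χ + χ⁻¹` and `-(ψ + ψ⁻¹)` cannot agree
on all of `X = {s : s² ≠ 1}`. -/
theorem stmt1 (q : ℕ) (hq : 3 < q) (hq7 : q ≠ 7) (S : Type*) [CommGroup S] [Fintype S]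
    [IsCyclic S] (hcard : Fintype.card S = q + 1)
    (χ ψ : S →* ℂˣ) (hχ : 2 < orderOf χ) (hψ : ψ ≠ 1) :
    ¬ ∀ s : S, s ^ 2 ≠ 1 →
        (χ s : ℂ) + ((χ s : ℂ))⁻¹ = -((ψ s : ℂ) + ((ψ s : ℂ))⁻¹) := by
  classical
  intro hyp
  set n : ℕ := q + 1 with hn
  -- the test function
  set F : S → ℂ := fun s =>
    ((χ s : ℂ) + ((χ s : ℂ))⁻¹ + (ψ s : ℂ) + ((ψ s : ℂ))⁻¹) * ((χ s : ℂ))⁻¹ with hFdef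
  set η₂ : S →* ℂˣ := (χ * χ)⁻¹ with hη₂
  set η₃ : S →* ℂˣ := ψ * χ⁻¹ with hη₃
  set η₄ : S →* ℂˣ := ψ⁻¹ * χ⁻¹ with hη₄
  have hFexp : ∀ s, F s = 1 + (η₂ s : ℂ) + (η₃ s : ℂ) + (η₄ s : ℂ) := by
    intro s
    have hx : (χ s : ℂ) ≠ 0 := Units.ne_zero _
    have hy : (ψ s : ℂ) ≠ 0 := Units.ne_zero _
    simp only [hFdef, hη₂, hη₃, hη₄, MonoidHom.mul_apply, MonoidHom.inv_apply,
      Units.val_mul, Units.val_inv_eq_inv_val]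
    field_simp
  -- first evaluation of the sum via orthogonality
  have hη₂ne : η₂ ≠ 1 := by
    intro hcon
    have : χ ^ 2 = 1 := by
      rw [hη₂] at hcon
      ext s
      have h1 := DFunLike.congr_fun hcon s
      simp only [MonoidHom.inv_apply, MonoidHom.mul_apply, MonoidHom.one_apply,
        inv_eq_one] at h1
      simp [pow_two, h1]
    have := orderOf_dvd_of_pow_eq_one this
    have := Nat.le_of_dvd (by norm_num) this
    omega
  have hsum2 : ∑ s, (η₂ s : ℂ) = 0 := sum_char_eq_zero η₂ hη₂ne
  have hsum3 : ∑ s, (η₃ s : ℂ) = 0 ∨ ∑ s, (η₃ s : ℂ) = (n : ℂ) := by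
    by_cases h : η₃ = 1
    · right
      rw [h]
      simp [← hcard]
    · left; exact sum_char_eq_zero η₃ h
  have hsum4 : ∑ s, (η₄ s : ℂ) = 0 ∨ ∑ s, (η₄ s : ℂ) = (n : ℂ) := by
    by_cases h : η₄ = 1
    · right
      rw [h]
      simp [← hcard]
    · left; exact sum_char_eq_zero η₄ h
  have hA1 : ∑ s, F s = (n : ℂ) + ∑ s, (η₃ s : ℂ) + ∑ s, (η₄ s : ℂ) := by
    calc ∑ s, F s = ∑ s, (1 + (η₂ s : ℂ) + (η₃ s : ℂ) + (η₄ s : ℂ)) := by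
          exact Finset.sum_congr rfl fun s _ => hFexp s
      _ = (∑ _s : S, (1:ℂ)) + ∑ s, (η₂ s : ℂ) + ∑ s, (η₃ s : ℂ) + ∑ s, (η₄ s : ℂ) := by
          rw [← Finset.sum_add_distrib, ← Finset.sum_add_distrib, ← Finset.sum_add_distrib]
      _ = (n : ℂ) + ∑ s, (η₃ s : ℂ) + ∑ s, (η₄ s : ℂ) := by
          rw [hsum2, Finset.sum_const, Finset.card_univ, hcard]
          push_cast
          ring
  -- second evaluation: the sum is supported on T = {s : s ^ 2 = 1}
  set T : Finset S := Finset.univ.filter (fun s => s ^ 2 = 1) with hT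
  have hsplit : ∑ s, F s = T.sum F := by
    rw [← Finset.sum_filter_add_sum_filter_not Finset.univ (fun s => s ^ 2 = 1) F]
    have : ∑ s ∈ Finset.univ.filter (fun s => ¬ s ^ 2 = 1), F s = 0 := by
      apply Finset.sum_eq_zero
      intro s hs
      rw [Finset.mem_filter] at hs
      have h0 := hyp s hs.2
      simp only [hFdef]
      rw [mul_eq_zero]
      left
      linear_combination h0
    rw [this, add_zero]
  have hTcard : T.card ≤ 2 := by
    have := IsCyclic.card_pow_eq_one_le (α := S) (n := 2) (by norm_num)
    simpa [hT] using this
  have hTval : ∀ s ∈ T, F s = 0 ∨ F s = 4 := by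
    intro s hs
    rw [Finset.mem_filter] at hs
    have hχs : (χ s : ℂ) = 1 ∨ (χ s : ℂ) = -1 := by
      refine sq_eq_one_iff.mp ?_
      rw [← Units.val_pow_eq_pow_val, ← map_pow, hs.2, map_one, Units.val_one]
    have hψs : (ψ s : ℂ) = 1 ∨ (ψ s : ℂ) = -1 := by
      refine sq_eq_one_iff.mp ?_
      rw [← Units.val_pow_eq_pow_val, ← map_pow, hs.2, map_one, Units.val_one]
    simp only [hFdef]
    rcases hχs with h1 | h1 <;> rcases hψs with h2 | h2 <;> rw [h1, h2] <;> norm_num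
  have hA2 : T.sum F = 0 ∨ T.sum F = 4 ∨ T.sum F = 8 := sum_mem_048 T F hTval hTcard
  -- combine
  have hn5 : 5 ≤ n := by omega
  have hn8 : n ≠ 8 := by omega
  rw [hsplit] at hA1
  rcases hsum3 with h3 | h3 <;> rcases hsum4 with h4 | h4 <;>
    rw [h3, h4] at hA1 <;>
    rcases hA2 with h | h | h <;>
    rw [h] at hA1 <;>
    [skip; skip; skip; skip; skip; skip; skip; skip; skip; skip; skip; skip] <;>
    (norm_cast at hA1 <;> omega)
end

section
/- Let S be a cyclic group of order q+1 with q > 3, let χ be a character of S of order greater than 2, and let ψ be a nontrivial character of S. If χ(s) + χ(s)⁻¹ = ψ(s) + ψ(s)⁻¹ for all s ∈ S with s² ≠ 1, then ψ = χ or ψ = χ⁻¹. -/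
/-- Lemma 4.2(iii): if `χ + χ⁻¹ = ψ + ψ⁻¹` on `X = {s : s² ≠ 1}`, then `ψ = χ` or
`ψ = χ⁻¹`. -/
theorem stmt2 (q : ℕ) (hq : 3 < q) (S : Type*) [CommGroup S] [Fintype S]
    [IsCyclic S] (hcard : Fintype.card S = q + 1)
    (χ ψ : S →* ℂˣ) (hχ : 2 < orderOf χ) (hψ : ψ ≠ 1)
    (h : ∀ s : S, s ^ 2 ≠ 1 →
      (χ s : ℂ) + ((χ s : ℂ))⁻¹ = (ψ s : ℂ) + ((ψ s : ℂ))⁻¹) :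
    ψ = χ ∨ ψ = χ⁻¹ := by
  obtain ⟨g, hg⟩ := IsCyclic.exists_generator (α := S)
  have hog : orderOf g = q + 1 := by
    rw [orderOf_eq_card_of_forall_mem_zpowers hg, Nat.card_eq_fintype_card, hcard]
  have hg2 : g ^ 2 ≠ 1 := by
    intro h1
    have hd := orderOf_dvd_of_pow_eq_one h1
    rw [hog] at hd
    have := Nat.le_of_dvd (by norm_num) hd
    omega
  have hval := h g hg2
  set x : ℂ := (χ g : ℂ) with hx
  set y : ℂ := (ψ g : ℂ) with hy
  have hx0 : x ≠ 0 := Units.ne_zero _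
  have hy0 : y ≠ 0 := Units.ne_zero _
  have key : (x - y) * (x * y - 1) = 0 := by
    field_simp at hval
    linear_combination hval
  rcases mul_eq_zero.mp key with h1 | h1
  · left
    have hgy : ψ g = χ g := Units.ext (by rw [← hx, ← hy]; linear_combination -h1)
    ext s
    obtain ⟨n, rfl⟩ := hg s
    rw [map_zpow, map_zpow, hgy]
  · right
    have hgy : ψ g = (χ g)⁻¹ := Units.ext (by
      push_cast
      rw [← hx, ← hy]
      field_simp
      linear_combination h1)
    ext s
    obtain ⟨n, rfl⟩ := hg s
    rw [map_zpow, map_zpow, hgy]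
    simp
end

section
/- Let S be a cyclic group of order q+1 with q > 3, let χ be a character of S of order greater than 2, ψ a nontrivial character of S, and let m : X → {±1} be any function on X = {s ∈ S : s² ≠ 1}. If χ(s) + χ(s)⁻¹ = m(s)·(ψ(s) + ψ(s)⁻¹) for all s ∈ X, then there is a character μ of S with μ² = 1 such that χ = ψμ or χ = ψ⁻¹μ. -/
/-- Lemma 4.2(iv), first part: if `χ + χ⁻¹ = m·(ψ + ψ⁻¹)` on `X` for some sign-valued
function `m`, then `χ = ψμ` or `χ = ψ⁻¹μ` for some character `μ` of order dividing 2. -/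
theorem stmt3 (q : ℕ) (hq : 3 < q) (S : Type*) [CommGroup S] [Fintype S]
    [IsCyclic S] (hcard : Fintype.card S = q + 1)
    (χ ψ : S →* ℂˣ) (hχ : 2 < orderOf χ) (hψ : ψ ≠ 1)
    (m : S → ℂ) (hm : ∀ s : S, s ^ 2 ≠ 1 → m s = 1 ∨ m s = -1)
    (h : ∀ s : S, s ^ 2 ≠ 1 →
      (χ s : ℂ) + ((χ s : ℂ))⁻¹ = m s * ((ψ s : ℂ) + ((ψ s : ℂ))⁻¹)) :
    ∃ μ : S →* ℂˣ, μ ^ 2 = 1 ∧ (χ = ψ * μ ∨ χ = ψ⁻¹ * μ) := by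
  obtain ⟨g, hg⟩ := IsCyclic.exists_generator (α := S)
  have hgord : orderOf g = q + 1 := by
    rw [orderOf_eq_card_of_forall_mem_zpowers hg, Nat.card_eq_fintype_card, hcard]
  have hg2 : g ^ 2 ≠ 1 := by
    intro h1
    have hd := orderOf_dvd_of_pow_eq_one h1
    rw [hgord] at hd
    have := Nat.le_of_dvd (by norm_num) hd
    omega
  set a : ℂ := (χ g : ℂ) with ha_def
  set b : ℂ := (ψ g : ℂ) with hb_def
  have ha : a ≠ 0 := Units.ne_zero _
  have hb : b ≠ 0 := Units.ne_zero _
  have e1 : a * a⁻¹ = 1 := mul_inv_cancel₀ ha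
  have e2 : b * b⁻¹ = 1 := mul_inv_cancel₀ hb
  have heq := h g hg2
  -- if a character squares to 1 at the generator, it squares to 1 everywhere
  have key : ∀ μ : S →* ℂˣ, (μ g) ^ 2 = 1 → μ ^ 2 = 1 := by
    intro μ hμ
    ext s
    obtain ⟨k, hk⟩ := hg s
    have : (μ s) ^ 2 = ((μ g) ^ 2) ^ k := by
      rw [← hk, map_zpow, ← zpow_natCast, ← zpow_mul, mul_comm, zpow_mul,
        zpow_natCast]
    simp [this, hμ]
  -- case analysis on the sign
  have main : χ g = ψ g ∨ χ g = (ψ g)⁻¹ ∨ χ g = -(ψ g) ∨ χ g = -(ψ g)⁻¹ := by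
    rcases hm g hg2 with hm1 | hm1 <;> rw [hm1] at heq
    · have h0 : (a - b) * (a * b - 1) = 0 := by
        rw [one_mul] at heq
        linear_combination a * b * heq - b * e1 + a * e2
      rcases mul_eq_zero.mp h0 with h0 | h0
      · left; ext; exact sub_eq_zero.mp h0
      · right; left; ext
        have hab : a * b = 1 := by linear_combination h0
        simp only [Units.val_inv_eq_inv_val]
        field_simp
        linear_combination hab
    · have h0 : (a + b) * (a * b + 1) = 0 := by
        linear_combination a * b * heq - b * e1 - a * e2
      rcases mul_eq_zero.mp h0 with h0 | h0
      · right; right; left; ext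
        simp only [Units.val_neg]
        linear_combination h0
      · right; right; right; ext
        have hab : a * b = -1 := by linear_combination h0
        simp only [Units.val_neg, Units.val_inv_eq_inv_val]
        rw [← ha_def, ← hb_def, ← mul_one a, ← e2, ← mul_assoc, hab]; ring
  have eq1 : χ = ψ * (χ * ψ⁻¹) := by
    rw [mul_comm χ ψ⁻¹, ← mul_assoc, mul_inv_cancel ψ]; exact (one_mul χ).symm
  have eq2 : χ = ψ⁻¹ * (χ * ψ) := by
    rw [mul_comm χ ψ, ← mul_assoc, inv_mul_cancel ψ]; exact (one_mul χ).symm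
  rcases main with hc | hc | hc | hc
  · exact ⟨χ * ψ⁻¹, key _ (by simp [MonoidHom.mul_apply, MonoidHom.inv_apply, hc]),
      Or.inl eq1⟩
  · exact ⟨χ * ψ, key _ (by simp [MonoidHom.mul_apply, hc]), Or.inr eq2⟩
  · exact ⟨χ * ψ⁻¹, key _ (by simp [MonoidHom.mul_apply, MonoidHom.inv_apply, hc]),
      Or.inl eq1⟩
  · exact ⟨χ * ψ, key _ (by simp [MonoidHom.mul_apply, hc]), Or.inr eq2⟩
end

section
/- Let q > 5 be an odd prime power, l = 𝔽_{q²}, k = 𝔽_q, N(x) = x^{q+1} the norm, and let η : k^× → {±1} be the nontrivial quadratic character of k^×. Then the function γ ↦ η(−N(γ − 1)), defined on the set {γ ∈ l : γ^{q+1} = 1, γ ≠ 1, γ ≠ −1}, takes both the value 1 and the value −1. -/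
open Finset Polynomial

section Aux

variable {k : Type*} [Field k] [Fintype k]

omit [Fintype k] in
/-- product of a nonzero square and a nonsquare is a nonsquare -/
lemma aux_not_isSquare_sq_mul {s b : k} (hs : s ≠ 0) (hb : ¬IsSquare b) :
    ¬IsSquare (s ^ 2 * b) := by
  rintro ⟨y, hy⟩
  refine hb ⟨y / s, ?_⟩
  field_simp
  linear_combination hy

/-- The character sum `∑ χ(x² - c) = -1` for `c ≠ 0`. -/
lemma aux_sum_quadChar [DecidableEq k] (hchar : ringChar k ≠ 2) {c : k} (hc : c ≠ 0) :
    ∑ x : k, quadraticChar k (x ^ 2 - c) = -1 := by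
  classical
  have h2 : (2 : k) ≠ 0 := Ring.two_ne_zero hchar
  set S : Finset (k × k) := univ.filter (fun p => p.1 ^ 2 - p.2 ^ 2 = c) with hSdef
  -- the conic has exactly `card k - 1` points
  have hcard : S.card = Fintype.card k - 1 := by
    have h1 : S.card = (univ.erase (0 : k)).card := by
      apply Finset.card_nbij' (fun p => p.1 + p.2)
          (fun u => ((u + c * u⁻¹) / 2, (u - c * u⁻¹) / 2))
      · intro p hp
        simp only [hSdef, Finset.mem_coe, mem_filter, mem_univ, true_and] at hp
        refine Finset.mem_erase.mpr ⟨fun h0 => hc ?_, mem_univ _⟩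
        have h0' : p.1 = -p.2 := eq_neg_of_add_eq_zero_left h0
        rw [← hp, h0']; ring
      · intro u hu
        have hu0 : u ≠ 0 := (Finset.mem_erase.mp hu).1
        simp only [hSdef, Finset.mem_coe, mem_filter, mem_univ, true_and]
        field_simp
        ring
      · intro p hp
        simp only [hSdef, Finset.mem_coe, mem_filter, mem_univ, true_and] at hp
        have h0 : p.1 + p.2 ≠ 0 := by
          intro h0
          have h0' : p.1 = -p.2 := eq_neg_of_add_eq_zero_left h0
          exact hc (by rw [← hp, h0']; ring)
        have hcu : c * (p.1 + p.2)⁻¹ = p.1 - p.2 := by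
          rw [← hp]
          field_simp
          ring
        have e1 : (p.1 + p.2 + c * (p.1 + p.2)⁻¹) / 2 = p.1 := by
          rw [hcu]; field_simp; ring
        have e2 : (p.1 + p.2 - c * (p.1 + p.2)⁻¹) / 2 = p.2 := by
          rw [hcu]; field_simp; ring
        beta_reduce; rw [e1, e2]
      · intro u _
        show (u + c * u⁻¹) / 2 + (u - c * u⁻¹) / 2 = u
        rw [← add_div, show u + c * u⁻¹ + (u - c * u⁻¹) = u * 2 by ring, mul_div_assoc,
          div_self h2, mul_one]
    rw [h1, Finset.card_erase_of_mem (mem_univ _), Finset.card_univ]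
  -- fiberwise count via number of square roots
  have hfib : (S.card : ℤ) = ∑ x : k, (quadraticChar k (x ^ 2 - c) + 1) := by
    have h1 : S.card = ∑ x : k, (S.filter (fun p => p.1 = x)).card :=
      Finset.card_eq_sum_card_fiberwise (fun p _ => mem_univ p.1)
    have h2' : ∀ x : k, ((S.filter (fun p => p.1 = x)).card : ℤ)
        = quadraticChar k (x ^ 2 - c) + 1 := by
      intro x
      rw [← quadraticChar_card_sqrts hchar (x ^ 2 - c)]
      norm_cast
      apply Finset.card_nbij' (fun p => p.2) (fun y => (x, y))
      · intro p hp
        simp only [hSdef, Finset.mem_coe, mem_filter, mem_univ, true_and] at hp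
        obtain ⟨hp1, hp2⟩ := hp
        simp only [Finset.mem_coe, Set.mem_toFinset, Set.mem_setOf_eq]
        subst hp2
        linear_combination -hp1
      · intro y hy
        simp only [Finset.mem_coe, Set.mem_toFinset, Set.mem_setOf_eq] at hy
        simp only [hSdef, Finset.mem_coe, mem_filter, mem_univ, true_and]
        exact ⟨by linear_combination -hy, trivial⟩
      · intro p hp
        simp only [hSdef, Finset.mem_coe, mem_filter, mem_univ, true_and] at hp
        obtain ⟨_, hp2⟩ := hp
        rw [← hp2]
      · intro y _
        rfl
    rw [h1]
    push_cast
    exact Finset.sum_congr rfl (fun x _ => h2' x)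
  have hpos : 1 ≤ Fintype.card k := Fintype.card_pos
  have hsum : ∑ x : k, (quadraticChar k (x ^ 2 - c) + 1)
      = (∑ x : k, quadraticChar k (x ^ 2 - c)) + Fintype.card k := by
    rw [Finset.sum_add_distrib, Finset.sum_const, Finset.card_univ]
    simp [mul_comm]
  have hcast : ((Fintype.card k - 1 : ℕ) : ℤ) = (Fintype.card k : ℤ) - 1 := by
    omega
  rw [hcard, hcast, hsum] at hfib
  linarith [hfib]

/-- Existence of `s ≠ 0` with `s² - c` a nonsquare, for `c ≠ 0`, `card k > 5`. -/
lemma aux_exists_nonsquare (hchar : ringChar k ≠ 2) (hbig : 5 < Fintype.card k)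
    {c : k} (hc : c ≠ 0) :
    ∃ s : k, s ≠ 0 ∧ ¬IsSquare (s ^ 2 - c) := by
  classical
  by_contra hcon
  push_neg at hcon
  have hterm : ∀ x : k, x ≠ 0 → 0 ≤ quadraticChar k (x ^ 2 - c) := by
    intro x hx
    rcases eq_or_ne (x ^ 2 - c) 0 with h | h
    · rw [h]
      simp
    · have h1 := (quadraticChar_one_iff_isSquare h).mpr (hcon x hx)
      rw [h1]
      norm_num
  have hsum := aux_sum_quadChar hchar hc
  have hzero : quadraticChar k ((0:k) ^ 2 - c) = -1 := by
    by_contra h0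
    have hge : ∀ x ∈ (univ : Finset k), 0 ≤ quadraticChar k (x ^ 2 - c) := by
      intro x _
      rcases eq_or_ne x 0 with rfl | hx
      · rcases eq_or_ne ((0:k) ^ 2 - c) 0 with h | h
        · rw [h]
          simp
        · rcases quadraticChar_dichotomy h with h1 | h1
          · rw [h1]
            norm_num
          · exact absurd h1 h0
      · exact hterm x hx
    have hnn := Finset.sum_nonneg hge
    rw [hsum] at hnn
    norm_num at hnn
  have hsplit : ∑ x : k, quadraticChar k (x ^ 2 - c)
      = quadraticChar k ((0:k) ^ 2 - c)
        + ∑ x ∈ univ.erase (0:k), quadraticChar k (x ^ 2 - c) := by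
    rw [← Finset.add_sum_erase _ _ (mem_univ (0:k))]
  have hrest : ∑ x ∈ univ.erase (0:k), quadraticChar k (x ^ 2 - c) = 0 := by
    rw [hsplit, hzero] at hsum
    linarith
  have hall : ∀ x ∈ univ.erase (0:k), quadraticChar k (x ^ 2 - c) = 0 := by
    intro x hx
    have hx0 : x ≠ 0 := (Finset.mem_erase.mp hx).1
    by_contra hne
    have hgt : 0 < quadraticChar k (x ^ 2 - c) :=
      lt_of_le_of_ne (hterm x hx0) (Ne.symm hne)
    have hge : ∀ y ∈ univ.erase (0:k), 0 ≤ quadraticChar k (y ^ 2 - c) :=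
      fun y hy => hterm y (Finset.mem_erase.mp hy).1
    have hle := Finset.single_le_sum hge hx
    rw [hrest] at hle
    linarith
  have hsq : ∀ x : k, x ≠ 0 → x ^ 2 = c := by
    intro x hx
    have h0 := hall x (Finset.mem_erase.mpr ⟨hx, mem_univ _⟩)
    exact sub_eq_zero.mp (quadraticChar_eq_zero_iff.mp h0)
  have h1 : (1:k) ^ 2 = c := hsq 1 one_ne_zero
  have hsub : (univ : Finset k) ⊆ {0, 1, -1} := by
    intro x _
    rcases eq_or_ne x 0 with rfl | hx
    · simp
    · have hxx : x ^ 2 = 1 ^ 2 := by rw [hsq x hx, h1]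
      have := sq_eq_sq_iff_eq_or_eq_neg.mp hxx
      simp only [Finset.mem_insert, Finset.mem_singleton]
      tauto
  have hle3 : Fintype.card k ≤ 3 := by
    calc Fintype.card k = (univ : Finset k).card := (Finset.card_univ).symm
      _ ≤ ({0, 1, -1} : Finset k).card := Finset.card_le_card hsub
      _ ≤ ({1, -1} : Finset k).card + 1 := Finset.card_insert_le _ _
      _ ≤ (({-1} : Finset k).card + 1) + 1 :=
          Nat.add_le_add_right (Finset.card_insert_le _ _) 1
      _ ≤ 3 := by simp
  omega

end Aux

section Fixed

variable {k K : Type*} [Field k] [Field K] [Fintype k] [Fintype K] [Algebra k K]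

/-- Fixed points of `x ↦ x^q` in `K` are exactly the image of `k` (card k = q). -/
lemma aux_mem_range {q : ℕ} (hk : Fintype.card k = q) (hq1 : 1 < q)
    {x : K} (hx : x ^ q = x) : ∃ e : k, algebraMap k K e = x := by
  classical
  set T : Finset K := univ.image (algebraMap k K) with hT
  set S : Finset K := univ.filter (fun y : K => y ^ q = y) with hS
  have hTS : T ⊆ S := by
    intro y hy
    simp only [hT, Finset.mem_image, mem_univ, true_and] at hy
    obtain ⟨e, rfl⟩ := hy
    simp only [hS, mem_filter, mem_univ, true_and]
    rw [← map_pow, ← hk, FiniteField.pow_card]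
  have hScard : S.card ≤ q := by
    have hsub : S ⊆ ((X : K[X]) ^ q - X).roots.toFinset := by
      intro y hy
      simp only [hS, mem_filter, mem_univ, true_and] at hy
      rw [Multiset.mem_toFinset, Polynomial.mem_roots
        (FiniteField.X_pow_card_sub_X_ne_zero K hq1)]
      simp [Polynomial.IsRoot, hy, sub_eq_zero]
    calc S.card ≤ _ := Finset.card_le_card hsub
      _ ≤ Multiset.card ((X : K[X]) ^ q - X).roots := Multiset.toFinset_card_le _
      _ ≤ ((X : K[X]) ^ q - X).natDegree := Polynomial.card_roots' _
      _ = q := FiniteField.X_pow_card_sub_X_natDegree_eq K hq1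
  have hTcard : T.card = q := by
    rw [hT, Finset.card_image_of_injective _ (algebraMap k K).injective,
      Finset.card_univ, hk]
  have hST : S = T := (Finset.eq_of_subset_of_card_le hTS (by omega)).symm
  have hxS : x ∈ S := by simp [hS, hx]
  rw [hST] at hxS
  simp only [hT, Finset.mem_image, mem_univ, true_and] at hxS
  exact hxS

/-- Main construction: from `t : k` with `t² - 4` a nonsquare, produce a norm-one
`γ ≠ ±1` in `K` with `-(γ-1)(γ-1)^q = t - 2` (mapped from `k`). -/
lemma aux_construct {q : ℕ} (hq5 : 5 < q) (hodd : Odd q)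
    (hq : ∃ p n : ℕ, p.Prime ∧ 0 < n ∧ q = p ^ n)
    (hk : Fintype.card k = q) (hK : Fintype.card K = q ^ 2)
    {t : k} (hns : ¬IsSquare (t ^ 2 - 4)) :
    ∃ γ : K, γ ^ (q + 1) = 1 ∧ γ ≠ 1 ∧ γ ≠ -1 ∧
      algebraMap k K (t - 2) = -((γ - 1) * (γ - 1) ^ q) := by
  classical
  obtain ⟨p, n, hp, hn, hqpn⟩ := hq
  -- characteristic facts
  haveI hcharK : CharP k (ringChar k) := ringChar.charP k
  obtain ⟨m, hm⟩ := FiniteField.card k (ringChar k)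
  have hpr : (ringChar k).Prime := hm.1
  have hpeq : p = ringChar k := by
    have hdvd : p ∣ ringChar k ^ (m : ℕ) := by
      rw [← hm.2, hk, hqpn]
      exact dvd_pow_self p hn.ne'
    exact (Nat.prime_dvd_prime_iff_eq hp hpr).mp (hp.dvd_of_dvd_pow hdvd)
  haveI hkp : CharP k p := by rw [hpeq]; exact hcharK
  haveI hKp : CharP K p := charP_of_injective_algebraMap (algebraMap k K).injective p
  have hpodd : p ≠ 2 := by
    rintro rfl
    rw [hqpn] at hodd
    exact (Nat.not_odd_iff_even.mpr
      (Nat.even_pow.mpr ⟨even_iff_two_dvd.mpr dvd_rfl, hn.ne'⟩)) hodd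
  have hrcK : ringChar K = p := ringChar.eq K p
  have hrcKne : ringChar K ≠ 2 := by rw [hrcK]; exact hpodd
  haveI : Fact p.Prime := ⟨hp⟩
  have h2K : (2 : K) ≠ 0 := Ring.two_ne_zero hrcKne
  have h4K : (4 : K) ≠ 0 := by
    intro h
    have h22 : (2 : K) * 2 = 0 := by rw [← h]; norm_num
    exact h2K (mul_self_eq_zero.mp h22)
  -- Frobenius on K is additive for exponent q
  have hfrobadd : ∀ x y : K, (x + y) ^ q = x ^ q + y ^ q := by
    intro x y; rw [hqpn]; exact add_pow_char_pow ..
  have hfrobsub : ∀ x y : K, (x - y) ^ q = x ^ q - y ^ q := by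
    intro x y; rw [hqpn]; exact sub_pow_char_pow ..
  -- image elements are fixed by x ↦ x^q
  have hfix : ∀ c : k, (algebraMap k K c) ^ q = algebraMap k K c := by
    intro c
    rw [← map_pow, ← hk, FiniteField.pow_card]
  have hmap2 : algebraMap k K (2:k) = (2:K) := map_ofNat _ 2
  have hmap4 : algebraMap k K (4:k) = (4:K) := map_ofNat _ 4
  -- every image element is a square in K
  have hsqK : ∀ c : k, IsSquare (algebraMap k K c) := by
    intro c
    rcases eq_or_ne c 0 with rfl | hc
    · simp
    have hc0 : algebraMap k K c ≠ 0 := fun h =>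
      hc ((algebraMap k K).injective (by simpa using h))
    rw [FiniteField.isSquare_iff hrcKne hc0]
    obtain ⟨r, hr⟩ := hodd
    have h1 : q ^ 2 = 2 * (2 * r ^ 2 + 2 * r) + 1 := by subst hr; ring
    have h2 : (q - 1) * (r + 1) = 2 * r ^ 2 + 2 * r := by
      have h3 : q - 1 = 2 * r := by omega
      rw [h3]; ring
    have hhalf : ∀ A : ℕ, (2 * A + 1) / 2 = A := fun A => by omega
    have hpow : Fintype.card K / 2 = (q - 1) * (r + 1) := by
      rw [hK, h1, h2, hhalf]
    have hc1 : (algebraMap k K c) ^ (q - 1) = 1 := by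
      have hstep : (algebraMap k K c) ^ (q - 1) * (algebraMap k K c)
          = 1 * algebraMap k K c := by
        rw [one_mul, ← pow_succ]
        have hq1 : q - 1 + 1 = q := by omega
        rw [hq1, hfix]
      exact mul_right_cancel₀ hc0 hstep
    rw [hpow, pow_mul, hc1, one_pow]
  -- the square root of t² - 4 in K
  obtain ⟨δ, hδ⟩ := hsqK (t ^ 2 - 4)
  have hδsq : δ ^ 2 = algebraMap k K (t ^ 2 - 4) := by rw [sq]; exact hδ.symm
  have ht4 : (t ^ 2 - 4 : k) ≠ 0 := by
    intro h
    apply hns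
    rw [h]
    exact ⟨0, by ring⟩
  have hδ0 : δ ≠ 0 := by
    intro h
    rw [h] at hδsq
    exact ht4 ((algebraMap k K).injective (by simpa using hδsq.symm))
  -- δ is not in the image of k
  have hδnotk : ∀ e : k, algebraMap k K e ≠ δ := by
    intro e he
    apply hns
    refine ⟨e, ?_⟩
    have hmap : algebraMap k K (e * e) = algebraMap k K (t ^ 2 - 4) := by
      rw [map_mul, he, ← sq, hδsq]
    exact ((algebraMap k K).injective hmap).symm
  -- δ^q = -δ
  have hδq : δ ^ q = -δ := by
    have hsq2 : (δ ^ q) ^ 2 = δ ^ 2 := by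
      rw [← pow_mul, mul_comm, pow_mul, hδsq, hfix, ← hδsq]
    rcases sq_eq_sq_iff_eq_or_eq_neg.mp hsq2 with h | h
    · exact absurd (aux_mem_range hk (by omega) h).choose_spec
        (fun he => hδnotk _ he)
    · exact h
  -- define γ
  set x : K := algebraMap k K t with hx
  have hxq : x ^ q = x := hfix t
  set γ : K := (x + δ) / 2 with hγ
  have h2q : (2 : K) ^ q = 2 := by
    rw [← hmap2, hfix]
  have hγq : γ ^ q = (x - δ) / 2 := by
    rw [hγ, div_pow, hfrobadd, hxq, hδq, ← sub_eq_add_neg, h2q]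
  have hδ2 : δ ^ 2 = x ^ 2 - 4 := by
    rw [hδsq, map_sub, map_pow, hx, hmap4]
  have hγγq : γ * γ ^ q = 1 := by
    rw [hγ, hγq, div_mul_div_comm]
    have hnum : (x + δ) * (x - δ) = 4 := by
      have hd : (x + δ) * (x - δ) = x ^ 2 - δ ^ 2 := by ring
      rw [hd, hδ2]; ring
    rw [hnum, show (2:K) * 2 = 4 from by norm_num]
    exact div_self h4K
  have hγpow : γ ^ (q + 1) = 1 := by rw [pow_succ, mul_comm, hγγq]
  -- γ ≠ ±1
  have hγ1 : γ ≠ 1 := by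
    intro h
    apply hδnotk (2 - t)
    rw [hγ, div_eq_one_iff_eq h2K] at h
    rw [map_sub, ← hx, hmap2]
    linear_combination -h
  have hγm1 : γ ≠ -1 := by
    intro h
    apply hδnotk (-2 - t)
    rw [hγ, div_eq_iff h2K] at h
    rw [map_sub, ← hx, map_neg, hmap2]
    linear_combination -h
  -- the norm identity
  have htrace : γ + γ ^ q = x := by
    rw [hγq, hγ, ← add_div,
      show x + δ + (x - δ) = x * 2 from by ring, mul_div_assoc,
      div_self h2K, mul_one]
  have hnorm : algebraMap k K (t - 2) = -((γ - 1) * (γ - 1) ^ q) := by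
    have hsubq : (γ - 1) ^ q = γ ^ q - 1 := by
      rw [hfrobsub, one_pow]
    rw [hsubq]
    have hexp : (γ - 1) * (γ ^ q - 1) = 2 - x := by
      have hd : (γ - 1) * (γ ^ q - 1) = γ * γ ^ q - (γ + γ ^ q) + 1 := by ring
      rw [hd, hγγq, htrace]; ring
    rw [hexp, map_sub, ← hx, hmap2]
    ring
  exact ⟨γ, hγpow, hγ1, hγm1, hnorm⟩

end Fixed

/-- Let `q > 5` be an odd prime power, `k = 𝔽_q ⊆ K = 𝔽_{q²}`, and `η` the nontrivial
quadratic character of `k^×`. Then `γ ↦ η(-N(γ-1))`, on norm-one elements `γ ≠ ±1`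
of `K` (where `N(x) = x·x^q` has values in `k`), takes both values `1` and `-1`. -/
theorem stmt10 (q : ℕ) (hq5 : 5 < q) (hodd : Odd q)
    (hq : ∃ p n : ℕ, p.Prime ∧ 0 < n ∧ q = p ^ n)
    (k K : Type*) [Field k] [Field K] [Fintype k] [Fintype K] [Algebra k K]
    (hk : Fintype.card k = q) (hK : Fintype.card K = q ^ 2)
    (η : kˣ →* ℂ) (hη1 : ∀ a : kˣ, η a = 1 ∨ η a = -1)
    (hη2 : ∀ a : kˣ, η a = 1 ↔ ∃ b : kˣ, b ^ 2 = a) :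
    ∃ (γ₁ γ₂ : K) (a₁ a₂ : kˣ),
      (γ₁ ^ (q + 1) = 1 ∧ γ₁ ≠ 1 ∧ γ₁ ≠ -1 ∧
        algebraMap k K ↑a₁ = -((γ₁ - 1) * (γ₁ - 1) ^ q) ∧ η a₁ = 1) ∧
      (γ₂ ^ (q + 1) = 1 ∧ γ₂ ≠ 1 ∧ γ₂ ≠ -1 ∧
        algebraMap k K ↑a₂ = -((γ₂ - 1) * (γ₂ - 1) ^ q) ∧ η a₂ = -1) := by
  classical
  -- characteristic of k is odd
  obtain ⟨p, n, hp, hn, hqpn⟩ := hq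
  haveI hcharK : CharP k (ringChar k) := ringChar.charP k
  obtain ⟨m, hm⟩ := FiniteField.card k (ringChar k)
  have hpr : (ringChar k).Prime := hm.1
  have hpeq : p = ringChar k := by
    have hdvd : p ∣ ringChar k ^ (m : ℕ) := by
      rw [← hm.2, hk, hqpn]
      exact dvd_pow_self p hn.ne'
    exact (Nat.prime_dvd_prime_iff_eq hp hpr).mp (hp.dvd_of_dvd_pow hdvd)
  have hpodd : p ≠ 2 := by
    rintro rfl
    rw [hqpn] at hodd
    exact (Nat.not_odd_iff_even.mpr
      (Nat.even_pow.mpr ⟨even_iff_two_dvd.mpr dvd_rfl, hn.ne'⟩)) hodd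
  have hrc : ringChar k ≠ 2 := hpeq ▸ hpodd
  have h2k : (2 : k) ≠ 0 := Ring.two_ne_zero hrc
  have h4k : (4 : k) ≠ 0 := by
    intro h
    have h22 : (2 : k) * 2 = 0 := by rw [← h]; norm_num
    exact h2k (mul_self_eq_zero.mp h22)
  have hbig : 5 < Fintype.card k := hk ▸ hq5
  -- γ₁ : from s with s² + 4 nonsquare, take t₁ = s² + 2
  obtain ⟨s₁, hs₁0, hs₁⟩ := aux_exists_nonsquare hrc hbig (neg_ne_zero.mpr h4k)
  have hs₁' : ¬IsSquare (s₁ ^ 2 + 4) := by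
    have he : s₁ ^ 2 - (-4 : k) = s₁ ^ 2 + 4 := by ring
    rwa [he] at hs₁
  set t₁ : k := s₁ ^ 2 + 2 with ht₁def
  have ht₁ : ¬IsSquare (t₁ ^ 2 - 4) := by
    have he : t₁ ^ 2 - 4 = s₁ ^ 2 * (s₁ ^ 2 + 4) := by rw [ht₁def]; ring
    rw [he]
    exact aux_not_isSquare_sq_mul hs₁0 hs₁'
  -- γ₂ : from s with s² - 4 nonsquare, take t₂ = s² - 2
  obtain ⟨s₂, hs₂0, hs₂⟩ := aux_exists_nonsquare hrc hbig h4k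
  set t₂ : k := s₂ ^ 2 - 2 with ht₂def
  have ht₂ : ¬IsSquare (t₂ ^ 2 - 4) := by
    have he : t₂ ^ 2 - 4 = s₂ ^ 2 * (s₂ ^ 2 - 4) := by rw [ht₂def]; ring
    rw [he]
    exact aux_not_isSquare_sq_mul hs₂0 hs₂
  obtain ⟨γ₁, hγ₁pow, hγ₁1, hγ₁m1, hγ₁norm⟩ :=
    aux_construct (K := K) hq5 hodd ⟨p, n, hp, hn, hqpn⟩ hk hK ht₁
  obtain ⟨γ₂, hγ₂pow, hγ₂1, hγ₂m1, hγ₂norm⟩ :=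
    aux_construct (K := K) hq5 hodd ⟨p, n, hp, hn, hqpn⟩ hk hK ht₂
  -- the units
  have ha₁0 : t₁ - 2 ≠ 0 := by
    rw [ht₁def]
    simpa using pow_ne_zero 2 hs₁0
  have ha₂0 : t₂ - 2 ≠ 0 := by
    intro h
    apply hs₂
    have he : s₂ ^ 2 - 4 = 0 := by rw [ht₂def] at h; linear_combination h
    rw [he]
    simp
  refine ⟨γ₁, γ₂, Units.mk0 _ ha₁0, Units.mk0 _ ha₂0,
    ⟨hγ₁pow, hγ₁1, hγ₁m1, by simpa using hγ₁norm, ?_⟩,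
    ⟨hγ₂pow, hγ₂1, hγ₂m1, by simpa using hγ₂norm, ?_⟩⟩
  · -- η a₁ = 1 since t₁ - 2 = s₁² is a nonzero square
    rw [hη2]
    refine ⟨Units.mk0 s₁ hs₁0, ?_⟩
    rw [Units.ext_iff]
    simp only [Units.val_pow_eq_pow_val, Units.val_mk0]
    rw [ht₁def]
    ring
  · -- η a₂ = -1 since t₂ - 2 = s₂² - 4 is a nonsquare
    rcases hη1 (Units.mk0 _ ha₂0) with h | h
    · exfalso
      obtain ⟨b, hb⟩ := (hη2 _).mp h
      apply hs₂
      have hb' : ((b : k)) ^ 2 = t₂ - 2 := by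
        have hval := congrArg (fun u : kˣ => (u : k)) hb
        simpa using hval
      exact ⟨b, by rw [← sq, hb', ht₂def]; ring⟩
    · exact h
end
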